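/- Let H = (V, E) be a clustered hypergraph, i.e., for every pair of distinct vertices u, v ∈ V there is a hyperedge e ∈ E with u, v ∈ e. Then: (i) for every generalized elimination order σ̄ of V, U_1^{σ̄} = V (and hence U_i^{σ̄} ⊆ U_1^{σ̄} for every i); and (ii) subw(H) = ρ*(H), the fractional edge cover number of H. -/

import Mathlib

/-!
In a clustered hypergraph any nonempty block meets an edge through every vertex, so `U_1 = V` for
every elimination order; the width of every order is then `h(V)`, and `subw(H)` is the maximum of
`h(V)` over edge-dominated polymatroids `h`. Submodularity gives the Shearer-type bound
`h(S) ≤ ∑ₑ W(e) h(e ∩ S)` for every fractional edge cover `W`, hence `h(V) ≤ ρ*(H)`. Conversely, a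
saddle point of the vertex–edge incidence game (von Neumann's minimax theorem) rescales to a
fractional vertex packing of total weight at least `ρ*(H)`, and its modular extension is an
edge-dominated polymatroid attaining the bound.
-/

open Finset

/-- A polymatroid on a finite vertex type `V`. -/
def IsPolymatroid {V : Type*} [DecidableEq V] [Fintype V] (h : Finset V → ℝ) : Prop :=
  h ∅ = 0 ∧ (∀ A : Finset V, 0 ≤ h A) ∧
    (∀ A B : Finset V, A ⊆ B → h A ≤ h B) ∧
    (∀ A B : Finset V, h (A ∪ B) + h (A ∩ B) ≤ h A + h B)

/-- `U(X)`: the union of the hyperedges of `E` intersecting the block `X`. -/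
def elimU {V : Type*} [DecidableEq V] (E : Finset (Finset V)) (X : Finset V) :
    Finset V :=
  (E.filter fun e => ¬ Disjoint e X).sup id

/-- Eliminating the block `X`: the hyperedges not intersecting `X`, together
with the new hyperedge `U(X) \ X`. -/
def elimStep {V : Type*} [DecidableEq V] (E : Finset (Finset V)) (X : Finset V) :
    Finset (Finset V) :=
  insert (elimU E X \ X) (E.filter fun e => Disjoint e X)

/-- The list `U_1, …, U_m` determined by a (generalized) elimination order. -/
def elimUs {V : Type*} [DecidableEq V] (E : Finset (Finset V)) :
    List (Finset V) → List (Finset V)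
  | [] => []
  | X :: σ => elimU E X :: elimUs (elimStep E X) σ

/-- A generalized elimination order: an ordered partition of `V` into
nonempty blocks. -/
def IsGenElimOrder {V : Type*} [DecidableEq V] [Fintype V]
    (σ : List (Finset V)) : Prop :=
  (∀ X ∈ σ, X.Nonempty) ∧ σ.Pairwise Disjoint ∧
    σ.foldr (· ∪ ·) ∅ = (Finset.univ : Finset V)

/-- `W` is a fractional edge cover of the hypergraph with hyperedges `E`. -/
def IsFracEdgeCover {V : Type*} [DecidableEq V] [Fintype V]
    (E : Finset (Finset V)) (W : Finset V → ℝ) : Prop :=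
  (∀ e ∈ E, 0 ≤ W e ∧ W e ≤ 1) ∧
    ∀ v : V, 1 ≤ ∑ e ∈ E.filter (fun e => v ∈ e), W e

/-- The fractional edge cover number `ρ*`. -/
noncomputable def fracCoverNumber {V : Type*} [DecidableEq V] [Fintype V]
    (E : Finset (Finset V)) : ℝ :=
  sInf {s : ℝ | ∃ W : Finset V → ℝ, IsFracEdgeCover E W ∧ s = ∑ e ∈ E, W e}

open Matrix in
theorem Matrix.exists_saddlePoint_stdSimplex {ι κ : Type*} [Fintype ι] [Fintype κ]
    [Nonempty ι] [Nonempty κ] (A : Matrix ι κ ℝ) :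
    ∃ p ∈ stdSimplex ℝ ι, ∃ q ∈ stdSimplex ℝ κ, ∃ t : ℝ,
      (∀ j, (p ᵥ* A) j ≤ t) ∧ ∀ i, t ≤ (A *ᵥ q) i := by
  classical
  set B : (ι → ℝ) →ₗ[ℝ] (κ → ℝ) →ₗ[ℝ] ℝ := toLinearMap₂' ℝ A
  obtain ⟨p, hp, q, hq, hpq⟩ := Sion.exists_isSaddlePointOn (f := fun x y => B x y)
    ⟨_, single_mem_stdSimplex ℝ (Classical.arbitrary ι)⟩ (convex_stdSimplex ℝ ι)
    (isCompact_stdSimplex ℝ ι)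
    (fun y _ =>
      (B.flip y).continuous_of_finiteDimensional.lowerSemicontinuous.lowerSemicontinuousOn _)
    (fun y _ => ((B.flip y).convexOn (convex_stdSimplex ℝ ι)).quasiconvexOn)
    (convex_stdSimplex ℝ κ) ⟨_, single_mem_stdSimplex ℝ (Classical.arbitrary κ)⟩
    (isCompact_stdSimplex ℝ κ)
    (fun x _ =>
      (B x).continuous_of_finiteDimensional.upperSemicontinuous.upperSemicontinuousOn _)
    (fun x _ => ((B x).concaveOn (convex_stdSimplex ℝ κ)).quasiconcaveOn)
  refine ⟨p, hp, q, hq, B p q, fun j => ?_, fun i => ?_⟩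
  · simpa only [B, toLinearMap₂'_apply', dotProduct_mulVec, dotProduct_single_one]
      using hpq p hp _ (single_mem_stdSimplex ℝ j)
  · simpa [B, toLinearMap₂'_apply'] using hpq _ (single_mem_stdSimplex ℝ i) q hq

theorem List.foldr_max_le_iff {α : Type*} [LinearOrder α] {l : List α} {a b : α} :
    l.foldr max b ≤ a ↔ b ≤ a ∧ ∀ x ∈ l, x ≤ a := by
  induction l with
  | nil => simp
  | cons x l ih => simp only [foldr_cons, max_le_iff, ih, mem_cons, forall_eq_or_imp]; tauto

section

variable {V : Type*} [DecidableEq V] [Fintype V]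

theorem isPolymatroid_sum {y : V → ℝ} (hy : ∀ v, 0 ≤ y v) :
    IsPolymatroid fun S => ∑ v ∈ S, y v :=
  ⟨sum_empty, fun _ => sum_nonneg fun v _ => hy v,
    fun _ _ hAB => sum_le_sum_of_subset_of_nonneg hAB fun v _ _ => hy v,
    fun _ _ => (sum_union_inter).le⟩

theorem IsPolymatroid.le_sum_mul_inter {h : Finset V → ℝ} (hh : IsPolymatroid h)
    {E : Finset (Finset V)} {W : Finset V → ℝ} (hW : IsFracEdgeCover E W) (S : Finset V) :
    h S ≤ ∑ e ∈ E, W e * h (e ∩ S) := by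
  obtain ⟨h_empty, -, h_mono, h_sub⟩ := hh
  induction S using Finset.induction_on with
  | empty => simp [h_empty]
  | insert a S ha ih =>
    have hgain : 0 ≤ h (insert a S) - h S := sub_nonneg.2 (h_mono _ _ (subset_insert a S))
    -- submodularity: the gain of adding `a` to `S` is at most its gain on every edge through `a`
    have hedge : ∀ e ∈ E, (if a ∈ e then W e * (h (insert a S) - h S) else 0) ≤
        W e * (h (e ∩ insert a S) - h (e ∩ S)) := by
      intro e he
      split_ifs with hae
      · refine mul_le_mul_of_nonneg_left ?_ (hW.1 e he).1
        have := h_sub (e ∩ insert a S) S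
        have hunion : e ∩ insert a S ∪ S = insert a S := by
          ext; simp only [mem_union, mem_inter, mem_insert]; grind
        have hinter : e ∩ insert a S ∩ S = e ∩ S := by
          ext; simp only [mem_inter, mem_insert]; grind
        rw [hunion, hinter] at this
        linarith
      · rw [inter_insert_of_notMem hae, sub_self, mul_zero]
    calc h (insert a S) = h S + 1 * (h (insert a S) - h S) := by ring
      _ ≤ ∑ e ∈ E, W e * h (e ∩ S) +
          (∑ e ∈ E with a ∈ e, W e) * (h (insert a S) - h S) := by
        gcongr
        exact hW.2 a
      _ = ∑ e ∈ E, W e * h (e ∩ S) +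
          ∑ e ∈ E, (if a ∈ e then W e * (h (insert a S) - h S) else 0) := by
        rw [sum_mul, sum_filter]
      _ ≤ ∑ e ∈ E, W e * h (e ∩ S) + ∑ e ∈ E, W e * (h (e ∩ insert a S) - h (e ∩ S)) := by
        gcongr with e he
        exact hedge e he
      _ = ∑ e ∈ E, W e * h (e ∩ insert a S) := by
        rw [← sum_add_distrib]
        exact sum_congr rfl fun e _ => by ring

theorem fracCoverNumber_le_sum {E : Finset (Finset V)} {W : Finset V → ℝ}
    (hW0 : ∀ e ∈ E, 0 ≤ W e) (hW1 : ∀ v, 1 ≤ ∑ e ∈ E with v ∈ e, W e) :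
    fracCoverNumber E ≤ ∑ e ∈ E, W e := by
  -- capping the weights at `1` keeps every vertex covered
  have hcap : IsFracEdgeCover E fun e => min (W e) 1 := by
    refine ⟨fun e he => ⟨le_min (hW0 e he) zero_le_one, min_le_right _ _⟩, fun v => ?_⟩
    by_cases hbig : ∃ e ∈ E.filter (fun e => v ∈ e), 1 ≤ W e
    · obtain ⟨e, he, hWe⟩ := hbig
      calc (1 : ℝ) = min (W e) 1 := (min_eq_right hWe).symm
        _ ≤ _ := single_le_sum (fun e he => le_min (hW0 e (mem_filter.1 he).1) zero_le_one) he
    · simp only [not_exists, not_and, not_le] at hbig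
      rw [sum_congr rfl fun e he => min_eq_left (hbig e he).le]
      exact hW1 v
  have hbdd : BddBelow {s : ℝ | ∃ W : Finset V → ℝ, IsFracEdgeCover E W ∧ s = ∑ e ∈ E, W e} := by
    refine ⟨0, ?_⟩
    rintro _ ⟨W', hW', rfl⟩
    exact sum_nonneg fun e he => (hW'.1 e he).1
  exact (csInf_le hbdd ⟨_, hcap, rfl⟩).trans (sum_le_sum fun e _ => min_le_left _ _)

theorem IsPolymatroid.le_fracCoverNumber {h : Finset V → ℝ} (hh : IsPolymatroid h)
    {E : Finset (Finset V)} (hdom : ∀ e ∈ E, h e ≤ 1) (hcov : ∀ v : V, ∃ e ∈ E, v ∈ e) :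
    h univ ≤ fracCoverNumber E := by
  have hone : IsFracEdgeCover E 1 := by
    refine ⟨fun _ _ => ⟨zero_le_one, le_rfl⟩, fun v => ?_⟩
    obtain ⟨e, he, hve⟩ := hcov v
    exact single_le_sum (f := (1 : Finset V → ℝ)) (fun _ _ => zero_le_one)
      (mem_filter.2 ⟨he, hve⟩)
  refine le_csInf ⟨_, 1, hone, rfl⟩ ?_
  rintro _ ⟨W, hW, rfl⟩
  calc h univ ≤ ∑ e ∈ E, W e * h (e ∩ univ) := hh.le_sum_mul_inter hW univ
    _ ≤ ∑ e ∈ E, W e * 1 := by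
      gcongr with e he
      · exact (hW.1 e he).1
      · rw [inter_univ]; exact hdom e he
    _ = ∑ e ∈ E, W e := by simp

theorem exists_fractionalMatching_ge_fracCoverNumber (E : Finset (Finset V))
    (hcov : ∀ v : V, ∃ e ∈ E, v ∈ e) :
    ∃ y : V → ℝ, (∀ v, 0 ≤ y v) ∧ (∀ e ∈ E, ∑ v ∈ e, y v ≤ 1) ∧
      fracCoverNumber E ≤ ∑ v, y v := by
  cases isEmpty_or_nonempty V
  · exact ⟨0, fun _ => le_rfl, fun _ _ => by simp,
      (fracCoverNumber_le_sum (W := 0) (fun _ _ => le_rfl) isEmptyElim).trans (by simp)⟩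
  -- von Neumann's theorem for the game "pick a vertex, pick an edge, pay if incident"
  let A : Matrix V (Finset V) ℝ := fun v e => if e ∈ E ∧ v ∈ e then 1 else 0
  obtain ⟨p, ⟨hp0, hp1⟩, q, ⟨hq0, hq1⟩, t, hpt, htq⟩ := A.exists_saddlePoint_stdSimplex
  have hload : ∀ e ∈ E, ∑ v ∈ e, p v ≤ t := fun e he => by
    simpa [A, Matrix.vecMul, dotProduct, he, ← sum_filter] using hpt e
  have hcover : ∀ v, t ≤ ∑ e ∈ E with v ∈ e, q e := fun v => by
    simpa [A, Matrix.mulVec, dotProduct, ite_and, sum_filter, sum_ite_mem] using htq v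
  have ht : 0 < t := by
    obtain ⟨v, -, hv⟩ := exists_lt_of_sum_lt (s := univ) (f := 0) (g := p) (by simp [hp1])
    obtain ⟨e, he, hve⟩ := hcov v
    exact hv.trans_le ((single_le_sum (fun u _ => hp0 u) hve).trans (hload e he))
  refine ⟨fun v => p v / t, fun v => div_nonneg (hp0 v) ht.le, fun e he => ?_, ?_⟩
  · rw [← sum_div, div_le_one ht]
    exact hload e he
  calc fracCoverNumber E ≤ ∑ e ∈ E, q e / t :=
        fracCoverNumber_le_sum (fun e _ => div_nonneg (hq0 e) ht.le) fun v => by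
          rw [← sum_div, le_div_iff₀ ht, one_mul]
          exact hcover v
    _ ≤ ∑ e, q e / t := sum_le_sum_of_subset_of_nonneg (subset_univ E)
        fun e _ _ => div_nonneg (hq0 e) ht.le
    _ = ∑ v, p v / t := by rw [← sum_div, ← sum_div, hp1, hq1]

theorem elimU_eq_univ {E : Finset (Finset V)} (hcov : ∀ v : V, ∃ e ∈ E, v ∈ e)
    (hclust : ∀ u v : V, u ≠ v → ∃ e ∈ E, u ∈ e ∧ v ∈ e) {X : Finset V} (hX : X.Nonempty) :
    elimU E X = univ := by
  obtain ⟨u, hu⟩ := hX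
  refine eq_univ_of_forall fun v => ?_
  obtain ⟨e, he, hue, hve⟩ : ∃ e ∈ E, u ∈ e ∧ v ∈ e := by
    rcases eq_or_ne u v with rfl | huv
    · obtain ⟨e, he, hue⟩ := hcov u
      exact ⟨e, he, hue, hue⟩
    · exact hclust u v huv
  exact mem_sup.2 ⟨e, mem_filter.2 ⟨he, not_disjoint_iff.2 ⟨u, hue, hu⟩⟩, hve⟩

theorem foldr_max_map_elimUs_eq {E : Finset (Finset V)} (hcov : ∀ v : V, ∃ e ∈ E, v ∈ e)
    (hclust : ∀ u v : V, u ≠ v → ∃ e ∈ E, u ∈ e ∧ v ∈ e) {h : Finset V → ℝ}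
    (hh : IsPolymatroid h) {σ : List (Finset V)} (hσ : IsGenElimOrder σ) :
    ((elimUs E σ).map h).foldr max 0 = h univ := by
  obtain ⟨h_empty, h_nonneg, h_mono, -⟩ := hh
  cases σ with
  | nil => simp [elimUs, ← hσ.2.2, h_empty]
  | cons X σ =>
    rw [elimUs, elimU_eq_univ hcov hclust (hσ.1 X (List.mem_cons_self ..)), List.map_cons,
      List.foldr_cons, max_eq_left]
    refine List.foldr_max_le_iff.2 ⟨h_nonneg _, ?_⟩
    simp only [List.mem_map, forall_exists_index, and_imp, forall_apply_eq_imp_iff₂]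
    exact fun U _ => h_mono U univ (subset_univ U)

theorem exists_isGenElimOrder_card_eq_one :
    ∃ σ : List (Finset V), IsGenElimOrder σ ∧ ∀ X ∈ σ, X.card = 1 := by
  refine ⟨univ.toList.map singleton, ⟨?_, ?_, ?_⟩, ?_⟩
  · simp
  · exact List.pairwise_map.2 <| (nodup_toList univ).imp fun huv => disjoint_singleton.2 huv
  · suffices ∀ l : List V, (l.map singleton).foldr (· ∪ ·) ∅ = l.toFinset by simp [this]
    intro l
    induction l with
    | nil => rfl
    | cons v l ih => rw [List.map_cons, List.foldr_cons, ih, List.toFinset_cons, insert_eq]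
  · simp

theorem sInf_foldr_max_map_elimUs_eq {E : Finset (Finset V)} (hcov : ∀ v : V, ∃ e ∈ E, v ∈ e)
    (hclust : ∀ u v : V, u ≠ v → ∃ e ∈ E, u ∈ e ∧ v ∈ e) {h : Finset V → ℝ}
    (hh : IsPolymatroid h) :
    sInf {y : ℝ | ∃ σ : List (Finset V), IsGenElimOrder σ ∧
        (∀ X ∈ σ, X.card = 1) ∧ y = ((elimUs E σ).map h).foldr max 0} = h univ := by
  obtain ⟨σ, hσ, hσ1⟩ := exists_isGenElimOrder_card_eq_one (V := V)
  suffices {y : ℝ | ∃ σ : List (Finset V), IsGenElimOrder σ ∧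
      (∀ X ∈ σ, X.card = 1) ∧ y = ((elimUs E σ).map h).foldr max 0} = {h univ} by
    rw [this, csInf_singleton]
  refine Set.eq_singleton_iff_unique_mem.2 ⟨⟨σ, hσ, hσ1, ?_⟩, ?_⟩
  · exact (foldr_max_map_elimUs_eq hcov hclust hh hσ).symm
  · rintro _ ⟨σ, hσ, -, rfl⟩
    exact foldr_max_map_elimUs_eq hcov hclust hh hσ

end

/-- for a clustered hypergraph (every vertex lies in some
hyperedge and any two distinct vertices lie in a common hyperedge):
(i) for every nonempty generalized elimination order, `U_1 = V`
(hence every `U_i ⊆ U_1`); and (ii) the submodular width equals the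
fractional edge cover number `ρ*`. -/
theorem clustered_hypergraph_subw {V : Type*} [DecidableEq V] [Fintype V]
    (E : Finset (Finset V))
    (hcov : ∀ v : V, ∃ e ∈ E, v ∈ e)
    (hclust : ∀ u v : V, u ≠ v → ∃ e ∈ E, u ∈ e ∧ v ∈ e) :
    (∀ σ : List (Finset V), IsGenElimOrder σ → σ ≠ [] →
      (elimUs E σ).getD 0 ∅ = (Finset.univ : Finset V) ∧
      ∀ i : ℕ, (elimUs E σ).getD i ∅ ⊆ (elimUs E σ).getD 0 ∅) ∧
    sSup {x : ℝ | ∃ h : Finset V → ℝ, IsPolymatroid h ∧ (∀ e ∈ E, h e ≤ 1) ∧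
        x = sInf {y : ℝ | ∃ σ : List (Finset V), IsGenElimOrder σ ∧
            (∀ X ∈ σ, X.card = 1) ∧ y = ((elimUs E σ).map h).foldr max 0}} =
      fracCoverNumber E := by
  refine ⟨fun σ hσ hne => ?_, IsGreatest.csSup_eq ⟨?_, ?_⟩⟩
  · obtain ⟨X, σ, rfl⟩ := List.exists_cons_of_ne_nil hne
    have hU : (elimUs E (X :: σ)).getD 0 ∅ = univ :=
      elimU_eq_univ hcov hclust (hσ.1 X (List.mem_cons_self ..))
    exact ⟨hU, fun i => hU ▸ subset_univ _⟩
  · obtain ⟨y, hy0, hyE, hρ⟩ := exists_fractionalMatching_ge_fracCoverNumber E hcov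
    have hy := isPolymatroid_sum hy0
    refine ⟨_, hy, hyE, ?_⟩
    rw [sInf_foldr_max_map_elimUs_eq hcov hclust hy]
    exact le_antisymm hρ (hy.le_fracCoverNumber hyE hcov)
  · rintro _ ⟨h, hh, hdom, rfl⟩
    rw [sInf_foldr_max_map_elimUs_eq hcov hclust hh]
    exact hh.le_fracCoverNumber hdom hcov
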